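/- arXiv:2011.06362 — 3 statements merged into one kernel-verified Lean document; each statement's English description precedes it below -/
import Mathlib

section
/- Let Ω ⊂ ℝ^N be a bounded C² domain, α > −1, γ > 0, let F be uniformly elliptic and positively homogeneous, c, h, p continuous and bounded with p > 0 on the closure of Ω, and assume λ₁^c > 0 with positive eigenfunction ψ₁ (a positive viscosity solution of |∇ψ₁|^α(F(D²ψ₁)+h·∇ψ₁) + (c(x)+λ₁^c)ψ₁^{1+α} = 0 in Ω, ψ₁ = 0 on ∂Ω). Set δ₀ = 2^{−γ/(1+α+γ)}(min p / λ₁^c)^{1/(1+α+γ)} and ε₀ = 2^{−γ/(1+α+γ)}|ψ₁|_∞^{−1}(min p / λ₁^c)^{1/(1+α+γ)}. Then for every ε < ε₀ and every δ ∈ [0,δ₀], the function u_* = εψ₁ is a viscosity sub-solution of |∇u|^α(F(D²u)+h(x)·∇u) + c(x)u^{1+α} + p(x)(u+δ)^{−γ} = 0 in Ω with u = 0 on ∂Ω. -/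
open Real Set Metric Filter Topology Bornology RealInnerProductSpace

noncomputable section

/-- Euclidean space `ℝ^N`. -/
abbrev Euc (N : ℕ) := EuclideanSpace ℝ (Fin N)

/-- The Hessian matrix (matrix of second partial derivatives) of `φ` at `x`. -/
def hessianMatrix {N : ℕ} (φ : Euc N → ℝ) (x : Euc N) : Matrix (Fin N) (Fin N) ℝ :=
  fun i j =>
    fderiv ℝ (fun y => fderiv ℝ φ y (EuclideanSpace.single j 1)) x (EuclideanSpace.single i 1)

/-- `F` is uniformly elliptic: there are ellipticity constants `0 < a < A` with
`a·tr(P) ≤ F(M+P) − F(M) ≤ A·tr(P)` for every symmetric `M` and positive semidefinite `P`. -/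
def UniformlyElliptic {N : ℕ} (F : Matrix (Fin N) (Fin N) ℝ → ℝ) : Prop :=
  ∃ a A : ℝ, 0 < a ∧ a < A ∧
    ∀ M P : Matrix (Fin N) (Fin N) ℝ, P.PosSemidef →
      a * P.trace ≤ F (M + P) - F M ∧ F (M + P) - F M ≤ A * P.trace

/-- `F` is positively homogeneous of degree one: `F(tM) = t F(M)` for `t > 0`. -/
def PosHom {N : ℕ} (F : Matrix (Fin N) (Fin N) ℝ → ℝ) : Prop :=
  ∀ t : ℝ, 0 < t → ∀ M : Matrix (Fin N) (Fin N) ℝ, F (t • M) = t * F M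

/-- Viscosity sub-solution of `|∇u|^α (F(D²u) + h(x)·∇u) = g(x,u)` in `Ω`:
whenever a `C²` test function `φ` touches `u` from above at `x̄ ∈ Ω` (i.e. `u − φ` has a local
maximum at `x̄`), either `∇φ(x̄) ≠ 0` and the inequality `≥` holds, or `u` is constant on a ball
around `x̄` and `0 ≥ g(x̄, u(x̄))`. -/
def IsViscSubSol {N : ℕ} (Ω : Set (Euc N)) (α : ℝ) (F : Matrix (Fin N) (Fin N) ℝ → ℝ)
    (h : Euc N → Euc N) (g : Euc N → ℝ → ℝ) (u : Euc N → ℝ) : Prop :=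
  ∀ φ : Euc N → ℝ, ∀ x ∈ Ω, ContDiffAt ℝ 2 φ x →
    IsLocalMax (fun y => u y - φ y) x →
    (gradient φ x ≠ 0 ∧
      g x (u x) ≤
        ‖gradient φ x‖ ^ α * (F (hessianMatrix φ x) + ⟪h x, gradient φ x⟫)) ∨
    ((∃ r > 0, ∀ y ∈ ball x r, u y = u x) ∧ g x (u x) ≤ 0)

/-- Viscosity super-solution of `|∇u|^α (F(D²u) + h(x)·∇u) = g(x,u)` in `Ω`. -/
def IsViscSuperSol {N : ℕ} (Ω : Set (Euc N)) (α : ℝ) (F : Matrix (Fin N) (Fin N) ℝ → ℝ)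
    (h : Euc N → Euc N) (g : Euc N → ℝ → ℝ) (u : Euc N → ℝ) : Prop :=
  (∀ φ : Euc N → ℝ, ∀ x ∈ Ω, ContDiffAt ℝ 2 φ x →
    IsLocalMin (fun y => u y - φ y) x → gradient φ x ≠ 0 →
      ‖gradient φ x‖ ^ α * (F (hessianMatrix φ x) + ⟪h x, gradient φ x⟫) ≤ g x (u x)) ∧
  (∀ x ∈ Ω, (∃ r > 0, ∀ y ∈ ball x r, u y = u x) → 0 ≤ g x (u x))

/-- Viscosity solution: both a sub- and a super-solution. -/
def IsViscSol {N : ℕ} (Ω : Set (Euc N)) (α : ℝ) (F : Matrix (Fin N) (Fin N) ℝ → ℝ)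
    (h : Euc N → Euc N) (g : Euc N → ℝ → ℝ) (u : Euc N → ℝ) : Prop :=
  IsViscSubSol Ω α F h g u ∧ IsViscSuperSol Ω α F h g u

/-- Bounded `C²` domain: a bounded connected open set given by a global `C²` defining function
whose gradient does not vanish on the boundary. -/
def IsBoundedC2Domain {N : ℕ} (Ω : Set (Euc N)) : Prop :=
  IsOpen Ω ∧ IsBounded Ω ∧ IsConnected Ω ∧
    ∃ ρ : Euc N → ℝ, ContDiff ℝ 2 ρ ∧ Ω = {x | ρ x < 0} ∧
      ∀ x ∈ frontier Ω, gradient ρ x ≠ 0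

/-- The first (demi-)eigenvalue `λ₁^c` of `-|∇·|^α(F(D²·)+h·∇·) - c|·|^α ·` :
`sup { λ | ∃ φ > 0 in Ω which is a viscosity super-solution of
`|∇φ|^α(F(D²φ)+h(x)·∇φ) + (c(x)+λ)φ^{1+α} = 0` }`. -/
def lambda1 {N : ℕ} (Ω : Set (Euc N)) (α : ℝ) (F : Matrix (Fin N) (Fin N) ℝ → ℝ)
    (h : Euc N → Euc N) (c : Euc N → ℝ) : ℝ :=
  sSup {l : ℝ | ∃ φ : Euc N → ℝ, (∀ x ∈ Ω, 0 < φ x) ∧ LowerSemicontinuousOn φ Ω ∧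
    IsViscSuperSol Ω α F h (fun x y => -((c x + l) * y ^ (1 + α))) φ}

/-
Scaling a viscosity sub-solution of `|∇u|^α (F(D²u) + h·∇u) = g(x, u)` by `ε > 0` multiplies the
operator by `ε^{1+α}`, so `εψ₁` is a sub-solution of the eigenvalue equation with right-hand side
`-(c + λ₁^c)(εψ₁)^{1+α}`. Sub-solutions stay sub-solutions when the right-hand side decreases, and
the choice of `δ₀` and `ε₀` gives `λ₁^c (εψ₁)^{1+α} (εψ₁ + δ)^γ ≤ (2δ₀)^γ δ₀^{1+α} λ₁^c = min p`,
i.e. `-(c + λ₁^c)(εψ₁)^{1+α} ≥ -(c (εψ₁)^{1+α} + p (εψ₁ + δ)^{-γ})`.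
-/

def degenerateEllipticOp {N : ℕ} (α : ℝ) (F : Matrix (Fin N) (Fin N) ℝ → ℝ)
    (h : Euc N → Euc N) (φ : Euc N → ℝ) (x : Euc N) : ℝ :=
  ‖gradient φ x‖ ^ α * (F (hessianMatrix φ x) + ⟪h x, gradient φ x⟫)

section Scaling

variable {N : ℕ} {φ : Euc N → ℝ} {x : Euc N}

lemma gradient_const_mul (hφ : DifferentiableAt ℝ φ x) (k : ℝ) :
    gradient (fun y => k * φ y) x = k • gradient φ x := by
  simp [gradient, fderiv_const_mul hφ]

lemma hessianMatrix_const_mul (hφ : ContDiffAt ℝ 2 φ x) (k : ℝ) :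
    hessianMatrix (fun y => k * φ y) x = k • hessianMatrix φ x := by
  funext i j
  have hdiff : ∀ᶠ y in 𝓝 x, DifferentiableAt ℝ φ y :=
    (hφ.eventually (by norm_num)).mono fun y hy => hy.differentiableAt (by norm_num)
  have hpartial : (fun y => fderiv ℝ (fun z => k * φ z) y (EuclideanSpace.single j 1))
      =ᶠ[𝓝 x] fun y => k * fderiv ℝ φ y (EuclideanSpace.single j 1) := by
    filter_upwards [hdiff] with y hy
    simp [fderiv_const_mul hy k]
  have hpartial_diff :
      DifferentiableAt ℝ (fun y => fderiv ℝ φ y (EuclideanSpace.single j 1)) x :=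
    ((hφ.fderiv_right le_rfl).differentiableAt one_ne_zero).clm_apply
      (differentiableAt_const _)
  simp only [hessianMatrix]
  rw [hpartial.fderiv_eq, fderiv_const_mul hpartial_diff k]
  simp [hessianMatrix]

lemma degenerateEllipticOp_const_mul {α k : ℝ} {F : Matrix (Fin N) (Fin N) ℝ → ℝ}
    (hF : PosHom F) (h : Euc N → Euc N) (hφ : ContDiffAt ℝ 2 φ x) (hk : 0 < k) :
    degenerateEllipticOp α F h (fun y => k * φ y) x
      = k ^ (1 + α) * degenerateEllipticOp α F h φ x := by
  rw [degenerateEllipticOp, degenerateEllipticOp,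
    gradient_const_mul (hφ.differentiableAt (by norm_num)), hessianMatrix_const_mul hφ,
    norm_smul, real_inner_smul_right, hF k hk, Real.norm_eq_abs, abs_of_pos hk,
    mul_rpow hk.le (norm_nonneg _), rpow_add hk, rpow_one]
  ring

end Scaling

lemma IsViscSubSol.const_mul {N : ℕ} {Ω : Set (Euc N)} {α ε : ℝ}
    {F : Matrix (Fin N) (Fin N) ℝ → ℝ} {h : Euc N → Euc N} {g g' : Euc N → ℝ → ℝ}
    {u : Euc N → ℝ} (hu : IsViscSubSol Ω α F h g u) (hF : PosHom F) (hε : 0 < ε)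
    (hg : ∀ x ∈ Ω, g' x (ε * u x) ≤ ε ^ (1 + α) * g x (u x)) :
    IsViscSubSol Ω α F h g' (fun x => ε * u x) := by
  intro φ x hx hφ hmax
  have hε' : 0 < ε⁻¹ := inv_pos.mpr hε
  have hmax' : IsLocalMax (fun y => u y - ε⁻¹ * φ y) x := by
    refine hmax.mono fun y hy => ?_
    have key : ∀ z, u z - ε⁻¹ * φ z = ε⁻¹ * (ε * u z - φ z) := fun z => by
      field_simp
    simp only [key]
    exact mul_le_mul_of_nonneg_left hy hε'.le
  rcases hu (fun y => ε⁻¹ * φ y) x hx (contDiffAt_const.mul hφ) hmax' with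
    ⟨hgrad, hineq⟩ | ⟨⟨r, hr, hconst⟩, hle⟩
  · left
    refine ⟨fun h0 => hgrad ?_, ?_⟩
    · rw [gradient_const_mul (hφ.differentiableAt (by norm_num)), h0, smul_zero]
    · change g x (u x) ≤ degenerateEllipticOp α F h (fun y => ε⁻¹ * φ y) x at hineq
      rw [degenerateEllipticOp_const_mul hF h hφ hε', inv_rpow hε.le] at hineq
      calc g' x (ε * u x) ≤ ε ^ (1 + α) * g x (u x) := hg x hx
        _ ≤ ε ^ (1 + α) * ((ε ^ (1 + α))⁻¹ * degenerateEllipticOp α F h φ x) :=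
          mul_le_mul_of_nonneg_left hineq (rpow_pos_of_pos hε _).le
        _ = degenerateEllipticOp α F h φ x := by
          rw [← mul_assoc, mul_inv_cancel₀ (rpow_pos_of_pos hε _).ne', one_mul]
  · right
    refine ⟨⟨r, hr, fun y hy => congrArg (ε * ·) (hconst y hy)⟩, ?_⟩
    exact (hg x hx).trans (mul_nonpos_of_nonneg_of_nonpos (rpow_pos_of_pos hε _).le hle)

/-- The paper's `δ₀`, with `I = min p` and `lam = λ₁^c`. -/
def delta0 (α γ I lam : ℝ) : ℝ :=
  2 ^ (-(γ / (1 + α + γ))) * (I / lam) ^ (1 / (1 + α + γ))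

section Delta0

variable {α γ I lam : ℝ}

lemma delta0_nonneg (hI : 0 ≤ I) (hlam : 0 < lam) : 0 ≤ delta0 α γ I lam := by
  unfold delta0; positivity

lemma delta0_rpow (hs : 1 + α + γ ≠ 0) (hI : 0 ≤ I) (hlam : 0 < lam) :
    delta0 α γ I lam ^ (1 + α + γ) = 2 ^ (-γ) * (I / lam) := by
  rw [delta0, mul_rpow (by positivity) (by positivity), ← rpow_mul (by norm_num),
    ← rpow_mul (by positivity), div_mul_cancel₀ _ hs, neg_mul, div_mul_cancel₀ _ hs,
    rpow_one]

lemma mul_rpow_le_mul_add_rpow_neg (hα : 0 ≤ 1 + α) (hγ : 0 < γ) (hI : 0 ≤ I)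
    (hlam : 0 < lam) {u δ : ℝ} (hu : 0 < u) (hu₀ : u ≤ delta0 α γ I lam) (hδ : 0 ≤ δ)
    (hδ₀ : δ ≤ delta0 α γ I lam) :
    lam * u ^ (1 + α) ≤ I * (u + δ) ^ (-γ) := by
  set d := delta0 α γ I lam
  have hd : 0 ≤ d := delta0_nonneg hI hlam
  have huδ : 0 < (u + δ) ^ γ := rpow_pos_of_pos (by positivity) γ
  have hbound : u ^ (1 + α) * (u + δ) ^ γ ≤ d ^ (1 + α) * (2 * d) ^ γ :=
    mul_le_mul (rpow_le_rpow hu.le hu₀ hα) (rpow_le_rpow (by positivity) (by linarith) hγ.le)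
      huδ.le (by positivity)
  have hd_pow : d ^ (1 + α) * (2 * d) ^ γ = 2 ^ γ * d ^ (1 + α + γ) := by
    rw [rpow_add' (y := 1 + α) hd (by linarith), mul_rpow (by norm_num) hd]
    ring
  have htwo : (2 : ℝ) ^ γ * 2 ^ (-γ) = 1 := by
    rw [← rpow_add (by norm_num), add_neg_cancel, rpow_zero]
  rw [rpow_neg (by positivity), ← div_eq_mul_inv, le_div_iff₀ huδ]
  calc lam * u ^ (1 + α) * (u + δ) ^ γ
      ≤ lam * (2 ^ γ * d ^ (1 + α + γ)) := by
        rw [mul_assoc, ← hd_pow]; exact mul_le_mul_of_nonneg_left hbound hlam.le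
    _ = (2 ^ γ * 2 ^ (-γ)) * (lam * (I / lam)) := by
        rw [delta0_rpow (by linarith) hI hlam]; ring
    _ = I := by rw [htwo, one_mul, mul_div_cancel₀ _ hlam.ne']

end Delta0

theorem statement3_general {N : ℕ} (Ω : Set (Euc N)) (hΩ : IsBoundedC2Domain Ω)
    (α γ : ℝ) (hα : -1 < α) (hγ : 0 < γ)
    (F : Matrix (Fin N) (Fin N) ℝ → ℝ) (hFhom : PosHom F)
    (c p : Euc N → ℝ) (h : Euc N → Euc N)
    (hppos : ∀ x ∈ closure Ω, 0 < p x)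
    (hl : 0 < lambda1 Ω α F h c)
    (ψ₁ : Euc N → ℝ) (hψpos : ∀ x ∈ Ω, 0 < ψ₁ x)
    (hψcont : ContinuousOn ψ₁ (closure Ω))
    (hψeig : IsViscSol Ω α F h
      (fun x y => -((c x + lambda1 Ω α F h c) * y ^ (1 + α))) ψ₁) :
    ∀ ε : ℝ, 0 < ε →
      ε < (2 : ℝ) ^ (-(γ / (1 + α + γ))) / sSup (ψ₁ '' closure Ω) *
        (sInf (p '' closure Ω) / lambda1 Ω α F h c) ^ (1 / (1 + α + γ)) →
      ∀ δ : ℝ, 0 ≤ δ →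
        δ ≤ (2 : ℝ) ^ (-(γ / (1 + α + γ))) *
          (sInf (p '' closure Ω) / lambda1 Ω α F h c) ^ (1 / (1 + α + γ)) →
        IsViscSubSol Ω α F h
          (fun x y => -(c x * y ^ (1 + α) + p x * (y + δ) ^ (-γ)))
          (fun x => ε * ψ₁ x) := by
  intro ε hε hε₀ δ hδ hδ₀
  set I := sInf (p '' closure Ω)
  set S := sSup (ψ₁ '' closure Ω)
  have hp_nonneg : ∀ y ∈ p '' closure Ω, 0 ≤ y := by
    rintro _ ⟨x, hx, rfl⟩; exact (hppos x hx).le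
  obtain ⟨-, hΩbdd, -⟩ := hΩ
  have hψS : BddAbove (ψ₁ '' closure Ω) :=
    (hΩbdd.isCompact_closure.image_of_continuousOn hψcont).bddAbove
  refine hψeig.1.const_mul hFhom hε fun x hx => ?_
  have hψx : 0 < ψ₁ x := hψpos x hx
  have hψxS : ψ₁ x ≤ S := le_csSup hψS ⟨x, subset_closure hx, rfl⟩
  have hu₀ : ε * ψ₁ x ≤ delta0 α γ I (lambda1 Ω α F h c) := by
    rw [div_mul_eq_mul_div, lt_div_iff₀ (hψx.trans_le hψxS)] at hε₀
    exact (mul_le_mul_of_nonneg_left hψxS hε.le).trans hε₀.le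
  have hkey := mul_rpow_le_mul_add_rpow_neg (by linarith) hγ (Real.sInf_nonneg hp_nonneg) hl
    (mul_pos hε hψx) hu₀ hδ hδ₀
  have hIp : I * (ε * ψ₁ x + δ) ^ (-γ) ≤ p x * (ε * ψ₁ x + δ) ^ (-γ) :=
    mul_le_mul_of_nonneg_right (csInf_le ⟨0, hp_nonneg⟩ ⟨x, subset_closure hx, rfl⟩)
      (rpow_nonneg (by positivity) _)
  rw [mul_rpow hε.le hψx.le] at hkey ⊢
  linarith

/-- Lemma 3.2: with `ψ₁` a positive eigenfunction for `λ₁^c`, and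
`δ₀ = 2^{−γ/(1+α+γ)}(min p/λ₁^c)^{1/(1+α+γ)}`, `ε₀ = δ₀/|ψ₁|_∞`, for every `0 < ε < ε₀` and
`δ ∈ [0, δ₀]`, `u_* = εψ₁` is a viscosity sub-solution of the regularized problem
`|∇u|^α(F(D²u)+h·∇u) + c u^{1+α} + p (u+δ)^{−γ} = 0`. -/
theorem statement3 {N : ℕ} (Ω : Set (Euc N)) (hΩ : IsBoundedC2Domain Ω)
    (α γ : ℝ) (hα : -1 < α) (hγ : 0 < γ)
    (F : Matrix (Fin N) (Fin N) ℝ → ℝ) (hF : UniformlyElliptic F) (hFhom : PosHom F)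
    (c p : Euc N → ℝ) (h : Euc N → Euc N)
    (hc : ContinuousOn c (closure Ω)) (hh : ContinuousOn h (closure Ω))
    (hp : ContinuousOn p (closure Ω)) (hppos : ∀ x ∈ closure Ω, 0 < p x)
    (hl : 0 < lambda1 Ω α F h c)
    (ψ₁ : Euc N → ℝ) (hψpos : ∀ x ∈ Ω, 0 < ψ₁ x)
    (hψcont : ContinuousOn ψ₁ (closure Ω)) (hψ0 : ∀ x ∈ frontier Ω, ψ₁ x = 0)
    (hψeig : IsViscSol Ω α F h
      (fun x y => -((c x + lambda1 Ω α F h c) * y ^ (1 + α))) ψ₁) :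
    ∀ ε : ℝ, 0 < ε →
      ε < (2 : ℝ) ^ (-(γ / (1 + α + γ))) / sSup (ψ₁ '' closure Ω) *
        (sInf (p '' closure Ω) / lambda1 Ω α F h c) ^ (1 / (1 + α + γ)) →
      ∀ δ : ℝ, 0 ≤ δ →
        δ ≤ (2 : ℝ) ^ (-(γ / (1 + α + γ))) *
          (sInf (p '' closure Ω) / lambda1 Ω α F h c) ^ (1 / (1 + α + γ)) →
        IsViscSubSol Ω α F h
          (fun x y => -(c x * y ^ (1 + α) + p x * (y + δ) ^ (-γ)))
          (fun x => ε * ψ₁ x) :=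
  statement3_general Ω hΩ α γ hα hγ F hFhom c p h hppos hl ψ₁ hψpos hψcont hψeig
end
end

section
/- Let α > −1 and γ ≥ 1. Let u : (0,1) → ℝ be twice differentiable with u > 0 on (0,1), satisfying |u'(x)|^α u''(x) + u(x)^{−γ} = 0 for all x ∈ (0,1), and assume u(x) → 0 as x → 0⁺. Then |u'(x)| → +∞ as x → 0⁺; in particular u is not Lipschitz continuous up to x = 0. -/
open Real Set Metric Filter Topology Bornology RealInnerProductSpace

noncomputable section

/-! The ODE says `(u'^(α+2) + (α+2) G(u))' = (α+2) u' (u'^α u'' + u^(-γ)) = 0` wherever `u' > 0`,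
where `G' = t^(-γ)`; since `γ ≥ 1`, `G` (a logarithm or `-t^(1-γ)/(γ-1)`) tends to `-∞` at `0⁺`.
Concavity together with `u(0⁺) = 0 < u` forces `u' > 0` near `0`, so the conserved energy gives
`u'^(α+2) = c - (α+2) G(u) → +∞`. A Lipschitz bound would bound `|u'|`. -/

lemma exists_hasDerivAt_rpow_neg_tendsto_atBot {γ : ℝ} (hγ : 1 ≤ γ) :
    ∃ G : ℝ → ℝ, (∀ t, 0 < t → HasDerivAt G (t ^ (-γ)) t) ∧ Tendsto G (𝓝[>] 0) atBot := by
  rcases hγ.eq_or_lt with rfl | hγ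
  · refine ⟨log, fun t ht => ?_, tendsto_log_nhdsGT_zero⟩
    simpa [rpow_neg_one] using hasDerivAt_log ht.ne'
  · refine ⟨fun t => -(t ^ (1 - γ) / (γ - 1)), fun t ht => ?_, ?_⟩
    · refine ((hasDerivAt_rpow_const (p := 1 - γ) (Or.inl ht.ne')).div_const (γ - 1)).neg
        |>.congr_deriv ?_
      rw [show 1 - γ - 1 = -γ by ring]
      field_simp [(sub_pos.2 hγ).ne']
      ring
    · exact tendsto_neg_atBot_iff.2 <|
        (tendsto_rpow_neg_nhdsGT_zero (by linarith)).atTop_div_const (sub_pos.2 hγ)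

lemma exists_mem_Ioo_deriv_pos_of_tendsto_nhdsGT {u u' : ℝ → ℝ} {a b c : ℝ} (hab : a < b)
    (hd : ∀ x ∈ Ioc a b, HasDerivAt u (u' x) x) (ha : Tendsto u (𝓝[>] a) (𝓝 c))
    (hcb : c < u b) : ∃ ξ ∈ Ioo a b, 0 < u' ξ := by
  obtain ⟨ε, hε, hεb⟩ :=
    ((eventually_mem_set.2 (Ioo_mem_nhdsGT hab)).and (ha.eventually_lt_const hcb)).exists
  have hsub : Icc ε b ⊆ Ioc a b := fun y hy => ⟨hε.1.trans_le hy.1, hy.2⟩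
  obtain ⟨ξ, hξ, hslope⟩ := exists_hasDerivAt_eq_slope u u' hε.2
    (fun y hy => (hd y (hsub hy)).continuousAt.continuousWithinAt)
    (fun y hy => hd y (hsub (Ioo_subset_Icc_self hy)))
  exact ⟨ξ, ⟨hε.1.trans hξ.1, hξ.2⟩, hslope ▸ div_pos (sub_pos.2 hεb) (sub_pos.2 hε.2)⟩

lemma tendsto_atTop_of_rpow_add_mul_eq {ι : Type*} {l : Filter ι} {f g : ι → ℝ} {p c : ℝ}
    (hp : 0 < p) (hf : ∀ᶠ i in l, 0 < f i) (hg : Tendsto g l atBot)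
    (hfg : ∀ᶠ i in l, f i ^ p + p * g i = c) : Tendsto f l atTop := by
  have hfp : Tendsto (fun i => f i ^ p) l atTop := by
    refine (tendsto_atTop_add_const_left l c
      ((tendsto_neg_atBot_atTop.comp hg).const_mul_atTop hp)).congr' ?_
    filter_upwards [hfg] with i hi
    simp only [Function.comp, ← hi]
    ring
  refine ((tendsto_rpow_atTop (inv_pos.2 hp)).comp hfp).congr' ?_
  filter_upwards [hf] with i hi
  simp [← rpow_mul hi.le, mul_inv_cancel₀ hp.ne']

lemma not_lipschitzOnWith_of_tendsto_abs_deriv_atTop {u u' : ℝ → ℝ} {s : Set ℝ} {l : Filter ℝ}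
    [l.NeBot] (hs : ∀ᶠ x in l, s ∈ 𝓝 x) (hd : ∀ᶠ x in l, HasDerivAt u (u' x) x)
    (h : Tendsto (fun x => |u' x|) l atTop) (K : NNReal) : ¬ LipschitzOnWith K u s := by
  intro hK
  obtain ⟨x, hxs, hxd, hxK⟩ := (hs.and (hd.and (h.eventually_gt_atTop K))).exists
  have := norm_deriv_le_of_lipschitzOn hxs hK
  rw [hxd.deriv, Real.norm_eq_abs] at this
  exact this.not_gt hxK

section Ode

variable {α γ : ℝ} {u u' u'' : ℝ → ℝ} {x : ℝ}

lemma deriv_deriv_neg_of_ode (hu : 0 < u x) (heq : |u' x| ^ α * u'' x + u x ^ (-γ) = 0) :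
    u'' x < 0 := by
  by_contra! h
  have := mul_nonneg (rpow_nonneg (abs_nonneg (u' x)) α) h
  linarith [rpow_pos_of_pos hu (-γ)]

lemma hasDerivAt_energy_of_ode {G : ℝ → ℝ} (hG : HasDerivAt G (u x ^ (-γ)) (u x))
    (hu : HasDerivAt u (u' x) x) (hu' : HasDerivAt u' (u'' x) x) (hpos : 0 < u' x)
    (heq : |u' x| ^ α * u'' x + u x ^ (-γ) = 0) :
    HasDerivAt (fun y => u' y ^ (α + 2) + (α + 2) * G (u y)) 0 x := by
  refine (((hasDerivAt_rpow_const (p := α + 2) (Or.inl hpos.ne')).comp x hu').add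
    ((hG.comp x hu).const_mul (α + 2))).congr_deriv ?_
  rw [abs_of_pos hpos] at heq
  rw [show α + 2 - 1 = α + 1 by ring, rpow_add hpos, rpow_one]
  linear_combination (α + 2) * u' x * heq

end Ode

/-- for `γ ≥ 1`, a positive solution of `|u'|^α u'' + u^{−γ} = 0` on `(0,1)`
with `u → 0` at `0⁺` satisfies `|u'| → +∞` at `0⁺`; in particular `u` is not Lipschitz up to
`x = 0`. -/
theorem statement13 (α γ : ℝ) (hα : -1 < α) (hγ : 1 ≤ γ)
    (u u' u'' : ℝ → ℝ)
    (hpos : ∀ x ∈ Ioo (0 : ℝ) 1, 0 < u x)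
    (hd1 : ∀ x ∈ Ioo (0 : ℝ) 1, HasDerivAt u (u' x) x)
    (hd2 : ∀ x ∈ Ioo (0 : ℝ) 1, HasDerivAt u' (u'' x) x)
    (heq : ∀ x ∈ Ioo (0 : ℝ) 1, |u' x| ^ α * u'' x + u x ^ (-γ) = 0)
    (h0 : Tendsto u (𝓝[>] (0 : ℝ)) (𝓝 0)) :
    Tendsto (fun x => |u' x|) (𝓝[>] (0 : ℝ)) atTop ∧
    ∀ K : NNReal, ¬ LipschitzOnWith K u (Ioo (0 : ℝ) 1) := by
  have hanti : StrictAntiOn u' (Ioo 0 1) :=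
    strictAntiOn_of_hasDerivWithinAt_neg (convex_Ioo 0 1)
      (fun x hx => (hd2 x hx).continuousAt.continuousWithinAt)
      (fun x hx => (hd2 x (interior_subset hx)).hasDerivWithinAt)
      (fun x hx => deriv_deriv_neg_of_ode (hpos x (interior_subset hx))
        (heq x (interior_subset hx)))
  obtain ⟨ξ, hξ, hξpos⟩ :=
    exists_mem_Ioo_deriv_pos_of_tendsto_nhdsGT (by norm_num : (0 : ℝ) < 1 / 2)
      (fun x hx => hd1 x ⟨hx.1, hx.2.trans_lt (by norm_num)⟩) h0 (hpos _ (by norm_num))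
  have hξ1 : ξ ∈ Ioo (0 : ℝ) 1 := ⟨hξ.1, hξ.2.trans (by norm_num)⟩
  have hsub : Ioo 0 ξ ⊆ Ioo (0 : ℝ) 1 := Ioo_subset_Ioo_right hξ1.2.le
  have hu'pos : ∀ x ∈ Ioo 0 ξ, 0 < u' x := fun x hx => hξpos.trans (hanti (hsub hx) hξ1 hx.2)
  obtain ⟨G, hG, hGbot⟩ := exists_hasDerivAt_rpow_neg_tendsto_atBot hγ
  have henergy : ∀ x ∈ Ioo 0 ξ, HasDerivAt (fun y => u' y ^ (α + 2) + (α + 2) * G (u y)) 0 x :=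
    fun x hx => hasDerivAt_energy_of_ode (hG _ (hpos x (hsub hx))) (hd1 x (hsub hx))
      (hd2 x (hsub hx)) (hu'pos x hx) (heq x (hsub hx))
  obtain ⟨c, hc⟩ := isOpen_Ioo.exists_is_const_of_deriv_eq_zero isPreconnected_Ioo
    (fun x hx => (henergy x hx).differentiableAt.differentiableWithinAt)
    (fun x hx => (henergy x hx).deriv)
  have hnear : Ioo 0 ξ ∈ 𝓝[>] (0 : ℝ) := Ioo_mem_nhdsGT hξ.1
  have hu0 : Tendsto u (𝓝[>] 0) (𝓝[>] 0) := tendsto_nhdsWithin_iff.2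
    ⟨h0, eventually_of_mem hnear fun x hx => hpos x (hsub hx)⟩
  have hu'top : Tendsto u' (𝓝[>] 0) atTop :=
    tendsto_atTop_of_rpow_add_mul_eq (by linarith) (eventually_of_mem hnear hu'pos)
      (hGbot.comp hu0) (eventually_of_mem hnear hc)
  have habs : Tendsto (fun x => |u' x|) (𝓝[>] 0) atTop :=
    hu'top.congr' (eventually_of_mem hnear fun x hx => (abs_of_pos (hu'pos x hx)).symm)
  refine ⟨habs, not_lipschitzOnWith_of_tendsto_abs_deriv_atTop ?_ ?_ habs⟩
  · filter_upwards [hnear] with x hx using isOpen_Ioo.mem_nhds (hsub hx)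
  · filter_upwards [hnear] with x hx using hd1 x (hsub hx)
end
end

section
/- Let N ≥ 2, α > −1, 0 < γ < 1. Let ũ : [0,1) → ℝ be continuous with ũ > 0 on [0,1), twice differentiable on (0,1), ũ'(r) < 0 on (0,1), satisfying |ũ'(r)|^α (ũ''(r) + (N−1)ũ'(r)/r) + ũ(r)^{−γ} = 0 on (0,1) and ũ(r) → 0 as r → 1⁻. Then |ũ'(r)|^{2+α} has a finite limit as r → 1⁻; more precisely, for all r ∈ [1/2,1), |ũ'(r)|^{2+α}/(2+α) · r^{(N−1)(2+α)} + ũ(r)^{1−γ}/(1−γ) · r^{(N−1)(2+α)} = C + (1/(1−γ)) ∫_{1/2}^r (N−1)(2+α) s^{(N−1)(2+α)−1} ũ(s)^{1−γ} ds, where C is the value of the left-hand side at r = 1/2. In particular ũ extends to a C¹ function on [0,1]. -/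
open Real Set Metric Filter Topology Bornology RealInnerProductSpace

noncomputable section

/-!
Write `w = -u' > 0` and `ν = N - 1`. Multiplying the equation by `w r^{ν(2+α)}` shows that the
energy `(w^{2+α}/(2+α) + u^{1-γ}/(1-γ)) r^{ν(2+α)}` has derivative
`ν(2+α) r^{ν(2+α)-1} u^{1-γ}/(1-γ) ≥ 0`; integrating gives the identity. Since `u ≤ u(0)`, the
energy minus `u(0)^{1-γ}/(1-γ) r^{ν(2+α)}` decreases, so the energy increases to a finite limit
at `1`; as `u → 0` there, `w^{2+α}` has a limit too.

At `0` we use the divergence form `(r^{ν(1+α)} w^{1+α})' = (1+α) r^{ν(1+α)} u^{-γ}`. The mean value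
theorem for `u` on `[0, s]` gives `ξ < s` with `ξ w(ξ) ≤ s w(ξ) = u(0) - u(s)`, so the flux
`r^{ν(1+α)} w^{1+α}` takes arbitrarily small values near `0` (here `ν ≥ 1`); the mean value
theorem for the flux then yields `w(t)^{1+α} ≤ (1+α) u(t)^{-γ} t`, hence `u'(0⁺) = 0`. With
one-sided limits of `u'` at both ends, `u` extends to a `C¹` function on `[0, 1]`.
-/

theorem contDiffOn_Icc_of_tendsto_deriv {f f' : ℝ → ℝ} {a b la lb : ℝ} (hab : a < b)
    (hf : ContinuousOn f (Icc a b)) (hderiv : ∀ x ∈ Ioo a b, HasDerivAt f (f' x) x)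
    (hf' : ContinuousOn f' (Ioo a b)) (ha : Tendsto f' (𝓝[>] a) (𝓝 la))
    (hb : Tendsto f' (𝓝[<] b) (𝓝 lb)) :
    ContDiffOn ℝ 1 f (Icc a b) := by
  have hdiff : DifferentiableOn ℝ f (Ioo a b) := fun x hx =>
    (hderiv x hx).differentiableAt.differentiableWithinAt
  have hg : ∀ x ∈ Icc a b, HasDerivWithinAt f (extendFrom (Ioo a b) f' x) (Icc a b) x := by
    intro x hx
    rcases eq_endpoints_or_mem_Ioo_of_mem_Icc hx with rfl | rfl | hx
    · rw [eq_lim_at_left_extendFrom_Ioo hab ha]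
      refine (hasDerivWithinAt_Ici_of_tendsto_deriv hdiff ((hf x hx).mono Ioo_subset_Icc_self)
        (Ioo_mem_nhdsGT hab) ?_).mono Icc_subset_Ici_self
      refine ha.congr' ?_
      filter_upwards [Ioo_mem_nhdsGT hab] with y hy using ((hderiv y hy).deriv).symm
    · rw [eq_lim_at_right_extendFrom_Ioo hab hb]
      refine (hasDerivWithinAt_Iic_of_tendsto_deriv hdiff ((hf x hx).mono Ioo_subset_Icc_self)
        (Ioo_mem_nhdsLT hab) ?_).mono Icc_subset_Iic_self
      refine hb.congr' ?_
      filter_upwards [Ioo_mem_nhdsLT hab] with y hy using ((hderiv y hy).deriv).symm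
    · rw [extendFrom_extends hf' x hx]
      exact (hderiv x hx).hasDerivWithinAt
  have hIcc : UniqueDiffOn ℝ (Icc a b) := uniqueDiffOn_Icc hab
  rw [contDiffOn_one_iff_derivWithin hIcc]
  refine ⟨fun x hx => (hg x hx).differentiableWithinAt, ?_⟩
  refine (continuousOn_Icc_extendFrom_Ioo hf' ha hb).congr fun x hx => ?_
  exact (hg x hx).derivWithin (hIcc x hx)

theorem exists_contDiffOn_Icc_eqOn_Ico {f f' : ℝ → ℝ} {a b L la lb : ℝ} (hab : a < b)
    (hf : ContinuousOn f (Ico a b)) (hfb : Tendsto f (𝓝[<] b) (𝓝 L))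
    (hderiv : ∀ x ∈ Ioo a b, HasDerivAt f (f' x) x)
    (hf' : ContinuousOn f' (Ioo a b)) (ha : Tendsto f' (𝓝[>] a) (𝓝 la))
    (hb : Tendsto f' (𝓝[<] b) (𝓝 lb)) :
    ∃ g : ℝ → ℝ, ContDiffOn ℝ 1 g (Icc a b) ∧ EqOn g f (Ico a b) := by
  have hfa : Tendsto f (𝓝[>] a) (𝓝 (f a)) := by
    rw [← nhdsWithin_Ioo_eq_nhdsGT hab]
    exact (hf a (left_mem_Ico.2 hab)).mono Ioo_subset_Ico_self
  have hfIoo : ContinuousOn f (Ioo a b) := hf.mono Ioo_subset_Ico_self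
  have hext : EqOn (extendFrom (Ioo a b) f) f (Ioo a b) := extendFrom_extends hfIoo
  refine ⟨extendFrom (Ioo a b) f, contDiffOn_Icc_of_tendsto_deriv hab
    (continuousOn_Icc_extendFrom_Ioo hfIoo hfa hfb) (fun x hx => ?_) hf' ha hb, fun x hx => ?_⟩
  · refine (hderiv x hx).congr_of_eventuallyEq ?_
    filter_upwards [isOpen_Ioo.mem_nhds hx] with y hy using hext hy
  · rcases eq_left_or_mem_Ioo_of_mem_Ico hx with rfl | hx
    · exact eq_lim_at_left_extendFrom_Ioo hab hfa
    · exact hext hx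

def radialEnergy (ν α γ : ℝ) (u u' : ℝ → ℝ) (r : ℝ) : ℝ :=
  (-u' r) ^ (2 + α) / (2 + α) * r ^ (ν * (2 + α)) + u r ^ (1 - γ) / (1 - γ) * r ^ (ν * (2 + α))

def radialFlux (ν α : ℝ) (u' : ℝ → ℝ) (r : ℝ) : ℝ :=
  r ^ ((1 + α) * ν) * (-u' r) ^ (1 + α)

section Pointwise

variable {ν α γ r : ℝ} {u u' u'' : ℝ → ℝ}

theorem radial_ode_mul_radius (hr : r ≠ 0)
    (hode : (-u' r) ^ α * (u'' r + ν * u' r / r) + u r ^ (-γ) = 0) :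
    (-u' r) ^ α * u'' r * r = ν * ((-u' r) ^ α * -u' r) - u r ^ (-γ) * r := by
  field_simp at hode
  linear_combination hode

theorem hasDerivAt_radialEnergy_of_ode (hr : 0 < r) (hu : HasDerivAt u (u' r) r)
    (hu' : HasDerivAt u' (u'' r) r) (hneg : u' r < 0) (hpos : 0 < u r) (hα : 2 + α ≠ 0)
    (hγ : 1 - γ ≠ 0) (hode : (-u' r) ^ α * (u'' r + ν * u' r / r) + u r ^ (-γ) = 0) :
    HasDerivAt (radialEnergy ν α γ u u')
      (ν * (2 + α) * r ^ (ν * (2 + α) - 1) * u r ^ (1 - γ) / (1 - γ)) r := by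
  have hw : 0 < -u' r := neg_pos.2 hneg
  have H := ((((hu'.neg).rpow_const (p := 2 + α) (Or.inl hw.ne')).div_const (2 + α)).mul
      (hasDerivAt_rpow_const (p := ν * (2 + α)) (Or.inl hr.ne'))).add
    (((hu.rpow_const (p := 1 - γ) (Or.inl hpos.ne')).div_const (1 - γ)).mul
      (hasDerivAt_rpow_const (p := ν * (2 + α)) (Or.inl hr.ne')))
  refine HasDerivAt.congr_deriv (f := radialEnergy ν α γ u u') H ?_
  have hw1 : (-u' r) ^ (2 + α - 1) = (-u' r) ^ α * -u' r := by
    rw [← rpow_add_one hw.ne']; ring_nf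
  have hw2 : (-u' r) ^ (2 + α) = (-u' r) ^ α * -u' r * -u' r := by
    rw [← hw1, ← rpow_add_one hw.ne']; ring_nf
  have hr1 : r ^ (ν * (2 + α)) = r ^ (ν * (2 + α) - 1) * r := by
    rw [← rpow_add_one hr.ne', sub_add_cancel]
  have key := radial_ode_mul_radius hr.ne' hode
  simp only [Pi.neg_apply]
  rw [hw1, hw2, hr1, show 1 - γ - 1 = -γ by ring]
  field_simp
  linear_combination (u' r * (1 - γ)) * key

theorem hasDerivAt_radialFlux_of_ode (hr : 0 < r) (hu' : HasDerivAt u' (u'' r) r) (hneg : u' r < 0)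
    (hode : (-u' r) ^ α * (u'' r + ν * u' r / r) + u r ^ (-γ) = 0) :
    HasDerivAt (radialFlux ν α u') ((1 + α) * r ^ ((1 + α) * ν) * u r ^ (-γ)) r := by
  have hw : 0 < -u' r := neg_pos.2 hneg
  have H := (hasDerivAt_rpow_const (p := (1 + α) * ν) (Or.inl hr.ne')).mul
    ((hu'.neg).rpow_const (p := 1 + α) (Or.inl hw.ne'))
  refine HasDerivAt.congr_deriv (f := radialFlux ν α u') H ?_
  have hw1 : (-u' r) ^ (1 + α) = (-u' r) ^ α * -u' r := by
    rw [← rpow_add_one hw.ne', add_comm]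
  have hr1 : r ^ ((1 + α) * ν) = r ^ ((1 + α) * ν - 1) * r := by
    rw [← rpow_add_one hr.ne', sub_add_cancel]
  have key := radial_ode_mul_radius hr.ne' hode
  simp only [Pi.neg_apply]
  rw [hw1, hr1, show 1 + α - 1 = α by ring]
  linear_combination (-(1 + α) * r ^ ((1 + α) * ν - 1)) * key

end Pointwise

/-- `ν` stands for `N - 1`; since `u' < 0`, the factor `|u'|^α` is written `(-u')^α`. -/
structure IsDecreasingRadialSolution (ν α γ : ℝ) (u u' u'' : ℝ → ℝ) : Prop where
  continuousOn : ContinuousOn u (Ico 0 1)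
  pos : ∀ r ∈ Ico (0 : ℝ) 1, 0 < u r
  hasDerivAt : ∀ r ∈ Ioo (0 : ℝ) 1, HasDerivAt u (u' r) r
  hasDerivAt_deriv : ∀ r ∈ Ioo (0 : ℝ) 1, HasDerivAt u' (u'' r) r
  deriv_neg : ∀ r ∈ Ioo (0 : ℝ) 1, u' r < 0
  ode : ∀ r ∈ Ioo (0 : ℝ) 1, (-u' r) ^ α * (u'' r + ν * u' r / r) + u r ^ (-γ) = 0

namespace IsDecreasingRadialSolution

variable {ν α γ : ℝ} {u u' u'' : ℝ → ℝ}

theorem antitoneOn (h : IsDecreasingRadialSolution ν α γ u u' u'') : AntitoneOn u (Ico 0 1) := by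
  refine (strictAntiOn_of_hasDerivWithinAt_neg (f' := u') (convex_Ico 0 1) h.continuousOn
    ?_ ?_).antitoneOn <;> rw [interior_Ico] <;> intro x hx
  · exact (h.hasDerivAt x hx).hasDerivWithinAt
  · exact h.deriv_neg x hx

theorem tendsto_nhdsGT_zero (h : IsDecreasingRadialSolution ν α γ u u' u'') :
    Tendsto u (𝓝[>] 0) (𝓝 (u 0)) := by
  rw [← nhdsWithin_Ioo_eq_nhdsGT one_pos]
  exact (h.continuousOn 0 (left_mem_Ico.2 one_pos)).mono Ioo_subset_Ico_self

theorem hasDerivAt_radialEnergy (h : IsDecreasingRadialSolution ν α γ u u' u'') (hα : -1 < α)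
    (hγ : γ < 1) {r : ℝ} (hr : r ∈ Ioo 0 1) :
    HasDerivAt (radialEnergy ν α γ u u')
      (ν * (2 + α) * r ^ (ν * (2 + α) - 1) * u r ^ (1 - γ) / (1 - γ)) r :=
  hasDerivAt_radialEnergy_of_ode hr.1 (h.hasDerivAt r hr) (h.hasDerivAt_deriv r hr)
    (h.deriv_neg r hr) (h.pos r (Ioo_subset_Ico_self hr)) (by linarith) (by linarith) (h.ode r hr)

theorem monotoneOn_radialEnergy (h : IsDecreasingRadialSolution ν α γ u u' u'') (hα : -1 < α)
    (hγ : γ < 1) (hν : 0 ≤ ν) : MonotoneOn (radialEnergy ν α γ u u') (Ioo 0 1) := by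
  refine monotoneOn_of_hasDerivWithinAt_nonneg
    (f' := fun r => ν * (2 + α) * r ^ (ν * (2 + α) - 1) * u r ^ (1 - γ) / (1 - γ)) (convex_Ioo 0 1)
    (fun x hx => (h.hasDerivAt_radialEnergy hα hγ hx).continuousAt.continuousWithinAt)
    ?_ ?_ <;> rw [interior_Ioo] <;> intro x hx
  · exact (h.hasDerivAt_radialEnergy hα hγ hx).hasDerivWithinAt
  · have hu := h.pos x (Ioo_subset_Ico_self hx)
    have : 0 ≤ ν * (2 + α) := mul_nonneg hν (by linarith)
    exact div_nonneg (mul_nonneg (mul_nonneg this (rpow_nonneg hx.1.le _)) (rpow_nonneg hu.le _))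
      (by linarith)

theorem antitoneOn_radialEnergy_sub (h : IsDecreasingRadialSolution ν α γ u u' u'')
    (hα : -1 < α) (hγ : γ < 1) (hν : 0 ≤ ν) :
    AntitoneOn (fun r => radialEnergy ν α γ u u' r - u 0 ^ (1 - γ) / (1 - γ) * r ^ (ν * (2 + α)))
      (Ioo 0 1) := by
  have hderiv : ∀ x ∈ Ioo (0 : ℝ) 1, HasDerivAt
      (fun r => radialEnergy ν α γ u u' r - u 0 ^ (1 - γ) / (1 - γ) * r ^ (ν * (2 + α)))
      (ν * (2 + α) * x ^ (ν * (2 + α) - 1) * (u x ^ (1 - γ) - u 0 ^ (1 - γ)) / (1 - γ)) x := by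
    intro x hx
    refine ((h.hasDerivAt_radialEnergy hα hγ hx).sub
      ((hasDerivAt_rpow_const (Or.inl hx.1.ne')).const_mul _)).congr_deriv ?_
    field_simp
  refine antitoneOn_of_hasDerivWithinAt_nonpos (convex_Ioo 0 1) (f' := fun x =>
    ν * (2 + α) * x ^ (ν * (2 + α) - 1) * (u x ^ (1 - γ) - u 0 ^ (1 - γ)) / (1 - γ))
    (fun x hx => (hderiv x hx).continuousAt.continuousWithinAt)
    ?_ ?_ <;> rw [interior_Ioo] <;> intro x hx
  · exact (hderiv x hx).hasDerivWithinAt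
  · have hux : u x ^ (1 - γ) ≤ u 0 ^ (1 - γ) :=
      rpow_le_rpow (h.pos x (Ioo_subset_Ico_self hx)).le
        (h.antitoneOn (left_mem_Ico.2 one_pos) (Ioo_subset_Ico_self hx) hx.1.le) (by linarith)
    have : 0 ≤ ν * (2 + α) * x ^ (ν * (2 + α) - 1) :=
      mul_nonneg (mul_nonneg hν (by linarith)) (rpow_nonneg hx.1.le _)
    exact div_nonpos_of_nonpos_of_nonneg (mul_nonpos_of_nonneg_of_nonpos this (by linarith))
      (by linarith)

theorem exists_tendsto_radialEnergy (h : IsDecreasingRadialSolution ν α γ u u' u'')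
    (hα : -1 < α) (hγ : γ < 1) (hν : 0 ≤ ν) :
    ∃ L, Tendsto (radialEnergy ν α γ u u') (𝓝[<] 1) (𝓝 L) := by
  set c := u 0 ^ (1 - γ) / (1 - γ)
  have hc : 0 ≤ c := div_nonneg (rpow_nonneg (h.pos 0 (left_mem_Ico.2 one_pos)).le _) (by linarith)
  have hhalf : (1 / 2 : ℝ) ∈ Ioo 0 1 := by norm_num
  have hbdd : BddAbove (radialEnergy ν α γ u u' '' Ioo (1 / 2) 1) := by
    refine ⟨radialEnergy ν α γ u u' (1 / 2) + c, ?_⟩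
    rintro _ ⟨r, hr, rfl⟩
    have hr01 : r ∈ Ioo (0 : ℝ) 1 := ⟨by linarith [hr.1], hr.2⟩
    have hanti := h.antitoneOn_radialEnergy_sub hα hγ hν hhalf hr01 hr.1.le
    have hrm : c * r ^ (ν * (2 + α)) ≤ c :=
      mul_le_of_le_one_right hc (rpow_le_one hr01.1.le hr.2.le (mul_nonneg hν (by linarith)))
    have hhalfm : 0 ≤ c * (1 / 2 : ℝ) ^ (ν * (2 + α)) := mul_nonneg hc (by positivity)
    simp only at hanti
    linarith
  exact ⟨_, MonotoneOn.tendsto_nhdsWithin_Ioo_left (by norm_num)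
    ((h.monotoneOn_radialEnergy hα hγ hν).mono (Ioo_subset_Ioo_left (by norm_num))) hbdd⟩

theorem exists_tendsto_abs_deriv_rpow (h : IsDecreasingRadialSolution ν α γ u u' u'')
    (hα : -1 < α) (hγ : γ < 1) (hν : 0 ≤ ν) (hu1 : Tendsto u (𝓝[<] 1) (𝓝 0)) :
    ∃ L, Tendsto (fun r => |u' r| ^ (2 + α)) (𝓝[<] 1) (𝓝 L) := by
  obtain ⟨L, hL⟩ := h.exists_tendsto_radialEnergy hα hγ hν
  have hrm : Tendsto (fun r : ℝ => r ^ (ν * (2 + α))) (𝓝[<] 1) (𝓝 1) := by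
    simpa using ((continuousAt_rpow_const 1 _ (Or.inl one_ne_zero)).tendsto).mono_left
      nhdsWithin_le_nhds
  have hu1γ : Tendsto (fun r => u r ^ (1 - γ)) (𝓝[<] 1) (𝓝 0) := by
    simpa [zero_rpow (by linarith : 1 - γ ≠ 0)] using
      hu1.rpow_const (p := 1 - γ) (Or.inr (by linarith))
  refine ⟨_, (((hL.div hrm one_ne_zero).sub (hu1γ.div_const (1 - γ))).const_mul (2 + α)).congr' ?_⟩
  filter_upwards [Ioo_mem_nhdsLT one_pos] with r hr
  have hR : r ^ (ν * (2 + α)) ≠ 0 := (rpow_pos_of_pos hr.1 _).ne'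
  have : 2 + α ≠ 0 := by linarith
  have : 1 - γ ≠ 0 := by linarith
  rw [abs_of_neg (h.deriv_neg r hr)]
  simp only [Pi.div_apply, radialEnergy]
  generalize r ^ (ν * (2 + α)) = R at hR ⊢
  field_simp
  ring

theorem exists_tendsto_deriv_nhdsLT_one (h : IsDecreasingRadialSolution ν α γ u u' u'')
    (hα : -1 < α) (hγ : γ < 1) (hν : 0 ≤ ν) (hu1 : Tendsto u (𝓝[<] 1) (𝓝 0)) :
    ∃ D, Tendsto u' (𝓝[<] 1) (𝓝 D) := by
  obtain ⟨L, hL⟩ := h.exists_tendsto_abs_deriv_rpow hα hγ hν hu1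
  refine ⟨_, (hL.rpow_const (p := (2 + α)⁻¹) (Or.inr (inv_nonneg.2 (by linarith)))).neg.congr' ?_⟩
  filter_upwards [Ioo_mem_nhdsLT one_pos] with r hr
  rw [rpow_rpow_inv (abs_nonneg _) (by linarith), abs_of_neg (h.deriv_neg r hr), neg_neg]

theorem radialEnergy_eq_add_integral (h : IsDecreasingRadialSolution ν α γ u u' u'')
    (hα : -1 < α) (hγ : γ < 1) {a r : ℝ} (ha : 0 < a) (har : a ≤ r) (hr : r < 1) :
    radialEnergy ν α γ u u' r = radialEnergy ν α γ u u' a +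
      1 / (1 - γ) * ∫ s in a..r, ν * (2 + α) * s ^ (ν * (2 + α) - 1) * u s ^ (1 - γ) := by
  have hsub : Icc a r ⊆ Ioo 0 1 := fun x hx => ⟨ha.trans_le hx.1, hx.2.trans_lt hr⟩
  have hcont : ContinuousOn (fun s => ν * (2 + α) * s ^ (ν * (2 + α) - 1) * u s ^ (1 - γ))
      (uIcc a r) := by
    rw [uIcc_of_le har]
    refine (continuousOn_const.mul (continuousOn_id.rpow_const fun x hx => ?_)).mul
      ((h.continuousOn.mono (hsub.trans Ioo_subset_Ico_self)).rpow_const fun x _ => ?_)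
    · exact Or.inl (hsub hx).1.ne'
    · exact Or.inr (by linarith)
  have hftc := intervalIntegral.integral_eq_sub_of_hasDerivAt
    (fun x hx => h.hasDerivAt_radialEnergy hα hγ (hsub (uIcc_of_le har ▸ hx)))
    ((hcont.div_const (1 - γ)).intervalIntegrable)
  rw [intervalIntegral.integral_div] at hftc
  rw [one_div_mul_eq_div, hftc]
  ring

theorem exists_radialFlux_le (h : IsDecreasingRadialSolution ν α γ u u' u'') (hα : -1 < α)
    (hν : 1 ≤ ν) {t : ℝ} (ht : t ∈ Ioo 0 1) :
    ∃ ξ ∈ Ioo 0 t, radialFlux ν α u' ξ ≤ (u 0 - u t) ^ (1 + α) := by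
  obtain ⟨ξ, hξ, hslope⟩ := exists_hasDerivAt_eq_slope u u' ht.1
    (h.continuousOn.mono (Icc_subset_Ico_right ht.2))
    (fun x hx => h.hasDerivAt x ⟨hx.1, hx.2.trans ht.2⟩)
  have hξ1 : ξ < 1 := hξ.2.trans ht.2
  have hw : 0 ≤ -u' ξ := (neg_pos.2 (h.deriv_neg ξ ⟨hξ.1, hξ1⟩)).le
  have htw : t * -u' ξ = u 0 - u t := by
    rw [hslope, sub_zero]
    field_simp [ht.1.ne']
    ring
  refine ⟨ξ, hξ, ?_⟩
  calc radialFlux ν α u' ξ ≤ ξ ^ (1 + α) * (-u' ξ) ^ (1 + α) :=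
        mul_le_mul_of_nonneg_right (rpow_le_rpow_of_exponent_ge hξ.1 hξ1.le (by nlinarith))
          (rpow_nonneg hw _)
    _ = (ξ * -u' ξ) ^ (1 + α) := (mul_rpow hξ.1.le hw).symm
    _ ≤ (t * -u' ξ) ^ (1 + α) :=
        rpow_le_rpow (mul_nonneg hξ.1.le hw) (mul_le_mul_of_nonneg_right hξ.2.le hw) (by linarith)
    _ = (u 0 - u t) ^ (1 + α) := by rw [htw]

theorem radialFlux_sub_le (h : IsDecreasingRadialSolution ν α γ u u' u'') (hα : -1 < α)
    (hγ : 0 ≤ γ) (hν : 0 ≤ ν) {s t : ℝ} (hs : 0 < s) (hst : s < t) (ht : t < 1) :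
    radialFlux ν α u' t - radialFlux ν α u' s ≤ (1 + α) * t ^ ((1 + α) * ν) * u t ^ (-γ) * t := by
  have hderiv : ∀ x ∈ Ioo (0 : ℝ) 1,
      HasDerivAt (radialFlux ν α u') ((1 + α) * x ^ ((1 + α) * ν) * u x ^ (-γ)) x :=
    fun x hx => hasDerivAt_radialFlux_of_ode hx.1 (h.hasDerivAt_deriv x hx) (h.deriv_neg x hx)
      (h.ode x hx)
  have hsub : Icc s t ⊆ Ioo 0 1 := fun x hx => ⟨hs.trans_le hx.1, hx.2.trans_lt ht⟩
  obtain ⟨η, hη, hslope⟩ := exists_hasDerivAt_eq_slope (radialFlux ν α u') _ hst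
    (fun x hx => (hderiv x (hsub hx)).continuousAt.continuousWithinAt)
    (fun x hx => hderiv x (hsub (Ioo_subset_Icc_self hx)))
  have hη0 : 0 < η := hs.trans hη.1
  have hut : 0 < u t := h.pos t ⟨(hs.trans hst).le, ht⟩
  rw [eq_div_iff (sub_pos.2 hst).ne'] at hslope
  rw [← hslope]
  have hα1 : 0 ≤ 1 + α := by linarith
  have htq : 0 ≤ (1 + α) * t ^ ((1 + α) * ν) := mul_nonneg hα1 (rpow_nonneg (hs.trans hst).le _)
  have htqu := mul_nonneg htq (rpow_nonneg hut.le (-γ))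
  have huη0 : 0 ≤ u η ^ (-γ) := rpow_nonneg (h.pos η ⟨hη0.le, hη.2.trans ht⟩).le _
  have huη : u η ^ (-γ) ≤ u t ^ (-γ) := rpow_le_rpow_of_nonpos hut
    (h.antitoneOn ⟨hη0.le, hη.2.trans ht⟩ ⟨(hs.trans hst).le, ht⟩ hη.2.le) (by linarith)
  have hηt : η ≤ t := hη.2.le
  have hts : t - s ≤ t := by linarith
  gcongr

theorem neg_deriv_rpow_le (h : IsDecreasingRadialSolution ν α γ u u' u'') (hα : -1 < α)
    (hγ : 0 ≤ γ) (hν : 1 ≤ ν) {t : ℝ} (ht : t ∈ Ioo 0 1) :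
    (-u' t) ^ (1 + α) ≤ (1 + α) * u t ^ (-γ) * t := by
  set B := (1 + α) * t ^ ((1 + α) * ν) * u t ^ (-γ) * t
  have hlim : Tendsto (fun s => (u 0 - u s) ^ (1 + α) + B) (𝓝[>] 0) (𝓝 B) := by
    simpa [zero_rpow (by linarith : 1 + α ≠ 0)] using
      (((tendsto_const_nhds (x := u 0)).sub h.tendsto_nhdsGT_zero).rpow_const
        (p := 1 + α) (Or.inr (by linarith))).add_const B
  have hflux : radialFlux ν α u' t ≤ B := by
    refine ge_of_tendsto hlim ?_
    filter_upwards [Ioo_mem_nhdsGT ht.1] with s hs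
    obtain ⟨ξ, hξ, hle⟩ := h.exists_radialFlux_le hα hν ⟨hs.1, hs.2.trans ht.2⟩
    have := h.radialFlux_sub_le hα hγ (by linarith) hξ.1 (hξ.2.trans hs.2) ht.2
    linarith
  rw [radialFlux, show B = t ^ ((1 + α) * ν) * ((1 + α) * u t ^ (-γ) * t) by ring] at hflux
  exact le_of_mul_le_mul_left hflux (rpow_pos_of_pos ht.1 _)

theorem tendsto_deriv_nhdsGT_zero (h : IsDecreasingRadialSolution ν α γ u u' u'')
    (hα : -1 < α) (hγ : 0 ≤ γ) (hν : 1 ≤ ν) : Tendsto u' (𝓝[>] 0) (𝓝 0) := by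
  have hu0 : 0 < u 0 := h.pos 0 (left_mem_Ico.2 one_pos)
  have hbound : Tendsto (fun t => ((1 + α) * u t ^ (-γ) * t) ^ (1 + α)⁻¹) (𝓝[>] 0) (𝓝 0) := by
    simpa [zero_rpow (inv_ne_zero (by linarith : 1 + α ≠ 0))] using
      (((h.tendsto_nhdsGT_zero.rpow_const (p := -γ) (Or.inl hu0.ne')).const_mul (1 + α)).mul
        (tendsto_id.mono_left nhdsWithin_le_nhds)).rpow_const
        (p := (1 + α)⁻¹) (Or.inr (inv_nonneg.2 (by linarith)))
  have hw : Tendsto (fun t => -u' t) (𝓝[>] 0) (𝓝 0) := by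
    refine tendsto_of_tendsto_of_tendsto_of_le_of_le' tendsto_const_nhds hbound ?_ ?_ <;>
      filter_upwards [Ioo_mem_nhdsGT one_pos] with t ht
    · exact (neg_pos.2 (h.deriv_neg t ht)).le
    · have hw := neg_pos.2 (h.deriv_neg t ht)
      rw [← rpow_rpow_inv hw.le (by linarith : 1 + α ≠ 0)]
      exact rpow_le_rpow (rpow_nonneg hw.le _) (h.neg_deriv_rpow_le hα hγ hν ht)
        (inv_nonneg.2 (by linarith))
  simpa using hw.neg

end IsDecreasingRadialSolution

/-- for `0 < γ < 1`, a positive decreasing radial solution `ũ` of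
`|ũ'|^α(ũ'' + (N−1)ũ'/r) + ũ^{−γ} = 0` on `(0,1)` with `ũ → 0` at `1⁻` satisfies: `|ũ'|^{2+α}`
has a finite limit at `1⁻`, the explicit energy identity holds on `[1/2,1)`, and `ũ` extends to
a `C¹` function on `[0,1]`. -/
theorem statement16 (N : ℕ) (hN : 2 ≤ N) (α γ : ℝ) (hα : -1 < α)
    (hγ0 : 0 < γ) (hγ1 : γ < 1)
    (u u' u'' : ℝ → ℝ)
    (hcont : ContinuousOn u (Ico (0 : ℝ) 1)) (hpos : ∀ r ∈ Ico (0 : ℝ) 1, 0 < u r)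
    (hd1 : ∀ r ∈ Ioo (0 : ℝ) 1, HasDerivAt u (u' r) r)
    (hd2 : ∀ r ∈ Ioo (0 : ℝ) 1, HasDerivAt u' (u'' r) r)
    (hneg : ∀ r ∈ Ioo (0 : ℝ) 1, u' r < 0)
    (heq : ∀ r ∈ Ioo (0 : ℝ) 1,
      |u' r| ^ α * (u'' r + ((N : ℝ) - 1) * u' r / r) + u r ^ (-γ) = 0)
    (h1 : Tendsto u (𝓝[<] (1 : ℝ)) (𝓝 0)) :
    (∃ L : ℝ, Tendsto (fun r => |u' r| ^ (2 + α)) (𝓝[<] (1 : ℝ)) (𝓝 L)) ∧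
    (∀ r ∈ Ico (1 / 2 : ℝ) 1,
      |u' r| ^ (2 + α) / (2 + α) * r ^ (((N : ℝ) - 1) * (2 + α)) +
        u r ^ (1 - γ) / (1 - γ) * r ^ (((N : ℝ) - 1) * (2 + α)) =
      (|u' (1 / 2)| ^ (2 + α) / (2 + α) * (1 / 2 : ℝ) ^ (((N : ℝ) - 1) * (2 + α)) +
        u (1 / 2) ^ (1 - γ) / (1 - γ) * (1 / 2 : ℝ) ^ (((N : ℝ) - 1) * (2 + α))) +
      (1 / (1 - γ)) * ∫ s in (1 / 2 : ℝ)..r,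
        ((N : ℝ) - 1) * (2 + α) * s ^ (((N : ℝ) - 1) * (2 + α) - 1) * u s ^ (1 - γ)) ∧
    ∃ v : ℝ → ℝ, ContDiffOn ℝ 1 v (Icc (0 : ℝ) 1) ∧ ∀ r ∈ Ico (0 : ℝ) 1, v r = u r := by
  have hsol : IsDecreasingRadialSolution ((N : ℝ) - 1) α γ u u' u'' :=
    ⟨hcont, hpos, hd1, hd2, hneg, fun r hr => by simpa only [abs_of_neg (hneg r hr)] using heq r hr⟩
  have hν : (1 : ℝ) ≤ (N : ℝ) - 1 := by
    have : (2 : ℝ) ≤ N := by exact_mod_cast hN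
    linarith
  obtain ⟨D, hD⟩ := hsol.exists_tendsto_deriv_nhdsLT_one hα hγ1 (by linarith) h1
  refine ⟨hsol.exists_tendsto_abs_deriv_rpow hα hγ1 (by linarith) h1, fun r hr => ?_,
    exists_contDiffOn_Icc_eqOn_Ico one_pos hcont h1 hd1
      (fun x hx => (hd2 x hx).continuousAt.continuousWithinAt)
      (hsol.tendsto_deriv_nhdsGT_zero hα hγ0.le hν) hD⟩
  rw [abs_of_neg (hneg r ⟨by linarith [hr.1], hr.2⟩), abs_of_neg (hneg (1 / 2) (by norm_num))]
  exact hsol.radialEnergy_eq_add_integral hα hγ1 (by norm_num) hr.1 hr.2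
end
end
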